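/- The function (s,v) \mapsto (3v/(\pi\sqrt{2} s^2)) \exp(-2(v^2 - v + 1)/s) \int_0^{4v/s} e^{-3\theta/2}(\pi\theta)^{-1/2} d\theta is a probability density on (0,\infty)^2, and its second marginal is (3/(2\pi)) v^{3/2}/(1+v^3). -/

import Mathlib

open Real MeasureTheory

/-- McKean's joint density of (T₁, V₁/c). -/
noncomputable def mcKean (s v : ℝ) : ℝ :=
  (3 * v / (π * Real.sqrt 2 * s ^ 2)) * Real.exp (-2 * (v ^ 2 - v + 1) / s) *
    ∫ θ in Set.Ioc (0:ℝ) (4 * v / s), Real.exp (-3 * θ / 2) * (π * θ) ^ (-(1:ℝ)/2)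

/-! With `a = 2 (v² - v + 1)`, the `s`-integral of the density is an integral of
`e ^ (-a / s) s⁻² e ^ (-3θ/2) (πθ) ^ (-1/2)` over the region `{s θ ≤ 4v}`. Integrating in `s`
first (substituting `s = 1 / u`) leaves `e ^ (-aθ / 4v) / a`, and the remaining `θ`-integral is a
`Γ(1/2)` integral equal to `√(2v) / (v + 1)`; since `a (v + 1) = 2 (1 + v³)` this is the stated
marginal. Its total mass is `∫ v ^ (3/2) / (1 + v³) dv = ⅓ ∫ u ^ (-1/6) / (1 + u) du
= ⅓ Γ(5/6) Γ(1/6) = 2π/3` by Euler's reflection formula. -/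

open Set

section ExpIntegrals

variable {a : ℝ}

theorem integral_exp_neg_mul_Ioi (ha : 0 < a) (c : ℝ) :
    ∫ u in Ioi c, exp (-(a * u)) = exp (-(a * c)) / a := by
  simpa [neg_mul, neg_div, div_neg] using integral_exp_mul_Ioi (neg_neg_of_pos ha) c

theorem integrableOn_exp_neg_div_div_sq_Ioi (ha : 0 < a) :
    IntegrableOn (fun s => exp (-(a / s)) / s ^ 2) (Ioi 0) := by
  have h := (integrableOn_Ioi_comp_rpow_iff (fun u => exp (-(a * u))) (p := -1)
    (by norm_num)).2 (by simpa [neg_mul] using exp_neg_integrableOn_Ioi 0 ha)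
  refine h.congr_fun (fun s (hs : 0 < s) => ?_) measurableSet_Ioi
  dsimp only
  rw [show (-1 : ℝ) - 1 = -2 by norm_num, rpow_neg hs.le, rpow_neg_one, rpow_two]
  simp [div_eq_mul_inv, mul_comm]

/-- The substitution `s = 1 / u` turns this into `∫ u in Ici S⁻¹, exp (-(a * u))`. -/
theorem integral_exp_neg_div_div_sq_Ioc (ha : 0 < a) {S : ℝ} (hS : 0 < S) :
    ∫ s in Ioc 0 S, exp (-(a / s)) / s ^ 2 = exp (-(a / S)) / a := by
  have h := integral_comp_rpow_Ioi ((Ici S⁻¹).indicator fun u => exp (-(a * u))) (p := -1)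
    (by norm_num)
  rw [setIntegral_indicator measurableSet_Ici,
    inter_eq_self_of_subset_right (Ici_subset_Ioi.2 (inv_pos.2 hS)),
    integral_Ici_eq_integral_Ioi, integral_exp_neg_mul_Ioi ha, ← div_eq_mul_inv] at h
  rw [← h, ← integral_indicator measurableSet_Ioc, ← integral_indicator measurableSet_Ioi]
  congr 1 with s
  by_cases hs : 0 < s
  · rw [indicator_of_mem (show s ∈ Ioi 0 from hs), rpow_neg_one,
      show (-1 : ℝ) - 1 = -2 by norm_num, rpow_neg hs.le, rpow_two]
    by_cases hsS : s ≤ S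
    · rw [indicator_of_mem (show s ∈ Ioc 0 S from ⟨hs, hsS⟩),
        indicator_of_mem (show s⁻¹ ∈ Ici S⁻¹ from inv_anti₀ hs hsS)]
      simp [div_eq_mul_inv, mul_comm]
    · rw [indicator_of_notMem fun h => hsS h.2,
        indicator_of_notMem (show s⁻¹ ∉ Ici S⁻¹ from fun h => hsS ((inv_le_inv₀ hS hs).1 h)),
        smul_zero]
  · simp [hs]

end ExpIntegrals

theorem integral_exp_neg_mul_mul_rpow_neg_half_Ioi {b : ℝ} (hb : 0 < b) :
    ∫ θ in Ioi 0, exp (-(b * θ)) * (π * θ) ^ (-(1:ℝ)/2) = (√b)⁻¹ := by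
  have hΓ := integral_rpow_mul_exp_neg_mul_Ioi (a := 1/2) (by norm_num) hb
  calc ∫ θ in Ioi 0, exp (-(b * θ)) * (π * θ) ^ (-(1:ℝ)/2)
      = π ^ (-(1:ℝ)/2) * ∫ θ in Ioi 0, θ ^ ((1:ℝ)/2 - 1) * exp (-(b * θ)) := by
        rw [← integral_const_mul]
        refine setIntegral_congr_fun measurableSet_Ioi fun θ (hθ : 0 < θ) => ?_
        rw [mul_rpow pi_pos.le hθ.le, show (1:ℝ)/2 - 1 = -(1:ℝ)/2 by norm_num]
        ring
    _ = (√b)⁻¹ := by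
        rw [hΓ, Gamma_one_half_eq, one_div, inv_rpow hb.le, ← sqrt_eq_rpow,
          show -(1:ℝ)/2 = -(1/2) by norm_num, rpow_neg pi_pos.le, ← sqrt_eq_rpow]
        field_simp

section Reflection

variable {s : ℝ}

theorem integral_rpow_mul_exp_neg_one_add_mul_Ioi (hs : 0 < s) {t : ℝ} (ht : 0 < t) :
    ∫ u in Ioi 0, u ^ (s - 1) * exp (-((1 + u) * t)) = Gamma s * (t ^ (-s) * exp (-t)) := by
  calc ∫ u in Ioi 0, u ^ (s - 1) * exp (-((1 + u) * t))
      = exp (-t) * ∫ u in Ioi 0, u ^ (s - 1) * exp (-(t * u)) := by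
        rw [← integral_const_mul]
        congr 1 with u
        rw [show -((1 + u) * t) = -t + -(t * u) by ring, exp_add]
        ring
    _ = Gamma s * (t ^ (-s) * exp (-t)) := by
        rw [integral_rpow_mul_exp_neg_mul_Ioi hs ht, one_div, inv_rpow ht.le, ← rpow_neg ht.le]
        ring

theorem integral_mul_exp_neg_one_add_mul_Ioi {u : ℝ} (hu : 0 < u) (c : ℝ) :
    ∫ t in Ioi 0, c * exp (-((1 + u) * t)) = c / (1 + u) := by
  rw [integral_const_mul, integral_exp_neg_mul_Ioi (by linarith), mul_zero, neg_zero, exp_zero,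
    mul_one_div]

theorem integrable_rpow_mul_exp_neg_one_add_mul_prod (hs0 : 0 < s) (hs1 : s < 1) :
    Integrable (fun p : ℝ × ℝ => p.2 ^ (s - 1) * exp (-((1 + p.2) * p.1)))
      ((volume.restrict (Ioi 0)).prod (volume.restrict (Ioi 0))) := by
  rw [integrable_prod_iff (by fun_prop)]
  constructor
  · filter_upwards [ae_restrict_mem measurableSet_Ioi] with t (ht : 0 < t)
    refine IntegrableOn.congr_fun ((integrableOn_rpow_mul_exp_neg_mul_rpow (p := 1) (s := s - 1)
      (b := t) (by linarith) one_pos ht).const_mul (exp (-t))) (fun u _ => ?_) measurableSet_Ioi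
    rw [rpow_one, show -((1 + u) * t) = -t + -t * u by ring, exp_add]
    ring
  · refine IntegrableOn.congr_fun ((GammaIntegral_convergent (sub_pos.2 hs1)).const_mul (Gamma s))
      (fun t (ht : 0 < t) => ?_) measurableSet_Ioi
    dsimp only
    rw [sub_sub_cancel_left, mul_comm (exp _), ← integral_rpow_mul_exp_neg_one_add_mul_Ioi hs0 ht]
    refine setIntegral_congr_fun measurableSet_Ioi fun u (hu : 0 < u) => ?_
    exact (norm_of_nonneg (by positivity)).symm

theorem integrableOn_rpow_sub_one_div_one_add_Ioi (hs0 : 0 < s) (hs1 : s < 1) :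
    IntegrableOn (fun u : ℝ => u ^ (s - 1) / (1 + u)) (Ioi 0) :=
  IntegrableOn.congr_fun (integrable_rpow_mul_exp_neg_one_add_mul_prod hs0 hs1).integral_prod_right
    (fun u hu => integral_mul_exp_neg_one_add_mul_Ioi hu (u ^ (s - 1))) measurableSet_Ioi

/-- Euler's integral behind the reflection formula: both sides equal `Γ(s) Γ(1 - s)`, by
computing `∫∫ u ^ (s - 1) e ^ (-(1 + u) t) du dt` in both orders. -/
theorem integral_rpow_sub_one_div_one_add_Ioi (hs0 : 0 < s) (hs1 : s < 1) :
    ∫ u in Ioi 0, u ^ (s - 1) / (1 + u) = π / sin (π * s) := by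
  have hK := integrable_rpow_mul_exp_neg_one_add_mul_prod hs0 hs1
  calc ∫ u in Ioi 0, u ^ (s - 1) / (1 + u)
      = ∫ u in Ioi 0, ∫ t in Ioi 0, u ^ (s - 1) * exp (-((1 + u) * t)) :=
        setIntegral_congr_fun measurableSet_Ioi
          fun u hu => (integral_mul_exp_neg_one_add_mul_Ioi hu _).symm
    _ = ∫ t in Ioi 0, ∫ u in Ioi 0, u ^ (s - 1) * exp (-((1 + u) * t)) :=
        (integral_prod_symm _ hK).symm.trans (integral_prod _ hK)
    _ = ∫ t in Ioi 0, Gamma s * (exp (-t) * t ^ ((1 - s) - 1)) :=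
        setIntegral_congr_fun measurableSet_Ioi fun t ht => by
          rw [integral_rpow_mul_exp_neg_one_add_mul_Ioi hs0 ht, sub_sub_cancel_left,
            mul_comm (_ ^ _)]
    _ = π / sin (π * s) := by
        rw [integral_const_mul, ← Gamma_eq_integral (sub_pos.2 hs1), Gamma_mul_Gamma_one_sub]

end Reflection

theorem rpow_three_halves_div_one_add_cube_eq {v : ℝ} (hv : 0 < v) :
    v ^ ((3:ℝ)/2) / (1 + v ^ 3) = 3⁻¹ * ((|(3:ℝ)| * v ^ ((3:ℝ) - 1)) •
      ((fun u : ℝ => u ^ ((5:ℝ)/6 - 1) / (1 + u)) (v ^ (3:ℝ)))) := by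
  have hcube : v ^ (3:ℝ) = v ^ 3 := by norm_cast
  have hexp : v ^ ((3:ℝ) - 1) * (v ^ (3:ℝ)) ^ ((5:ℝ)/6 - 1) = v ^ ((3:ℝ)/2) := by
    rw [← rpow_mul hv.le, ← rpow_add hv]
    norm_num
  rw [smul_eq_mul, abs_of_pos three_pos, ← hexp, hcube]
  field_simp

theorem integrableOn_rpow_three_halves_div_one_add_cube :
    IntegrableOn (fun v : ℝ => v ^ ((3:ℝ)/2) / (1 + v ^ 3)) (Ioi 0) :=
  IntegrableOn.congr_fun (((integrableOn_Ioi_comp_rpow_iff _ three_ne_zero).2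
      (integrableOn_rpow_sub_one_div_one_add_Ioi (s := 5/6) (by norm_num) (by norm_num))).const_mul
    3⁻¹) (fun _ hv => (rpow_three_halves_div_one_add_cube_eq hv).symm) measurableSet_Ioi

theorem integral_rpow_three_halves_div_one_add_cube :
    ∫ v in Ioi 0, v ^ ((3:ℝ)/2) / (1 + v ^ 3) = 2 * π / 3 := by
  rw [setIntegral_congr_fun measurableSet_Ioi fun _ hv => rpow_three_halves_div_one_add_cube_eq hv,
    integral_const_mul,
    integral_comp_rpow_Ioi (fun u : ℝ => u ^ ((5:ℝ)/6 - 1) / (1 + u)) three_ne_zero,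
    integral_rpow_sub_one_div_one_add_Ioi (by norm_num) (by norm_num),
    show π * (5/6) = π - π/6 by ring, sin_pi_sub, sin_pi_div_six]
  ring

section Fubini

variable {w : ℝ → ℝ} {a c : ℝ}

/-- Both sides are the integral of `e ^ (-a / s) s⁻² w θ` over `{s θ ≤ c}` in the open quadrant. -/
theorem integral_exp_neg_div_div_sq_mul_integral_Ioc (hw : IntegrableOn w (Ioi 0)) (ha : 0 < a)
    (hc : 0 < c) :
    IntegrableOn (fun s => exp (-(a / s)) / s ^ 2 * ∫ θ in Ioc 0 (c / s), w θ) (Ioi 0) ∧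
    ∫ s in Ioi 0, exp (-(a / s)) / s ^ 2 * ∫ θ in Ioc 0 (c / s), w θ
      = ∫ θ in Ioi 0, w θ * (exp (-(a * θ / c)) / a) := by
  set F := {p : ℝ × ℝ | p.1 * p.2 ≤ c}.indicator fun p => exp (-(a / p.1)) / p.1 ^ 2 * w p.2
  have hF : Integrable F ((volume.restrict (Ioi 0)).prod (volume.restrict (Ioi 0))) :=
    ((integrableOn_exp_neg_div_div_sq_Ioi ha).mul_prod hw).indicator
      (measurableSet_le (by fun_prop) measurable_const)
  have slice_snd : ∀ s ∈ Ioi (0:ℝ), ∫ θ in Ioi 0, F (s, θ)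
      = exp (-(a / s)) / s ^ 2 * ∫ θ in Ioc 0 (c / s), w θ := by
    intro s (hs : 0 < s)
    have : (fun θ => F (s, θ))
        = (Iic (c / s)).indicator fun θ => exp (-(a / s)) / s ^ 2 * w θ := by
      ext θ
      simp only [F, indicator_apply, mem_ofPred_eq, mem_Iic, le_div_iff₀' hs]
    rw [this, integral_indicator measurableSet_Iic, Measure.restrict_restrict measurableSet_Iic,
      Iic_inter_Ioi, integral_const_mul]
  have slice_fst : ∀ θ ∈ Ioi (0:ℝ), ∫ s in Ioi 0, F (s, θ)
      = w θ * (exp (-(a * θ / c)) / a) := by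
    intro θ (hθ : 0 < θ)
    have : (fun s => F (s, θ))
        = (Iic (c / θ)).indicator fun s => exp (-(a / s)) / s ^ 2 * w θ := by
      ext s
      simp only [F, indicator_apply, mem_ofPred_eq, mem_Iic, le_div_iff₀ hθ]
    rw [this, integral_indicator measurableSet_Iic, Measure.restrict_restrict measurableSet_Iic,
      Iic_inter_Ioi, integral_mul_const, integral_exp_neg_div_div_sq_Ioc ha (by positivity),
      div_div_eq_mul_div, mul_comm]
  refine ⟨IntegrableOn.congr_fun hF.integral_prod_left slice_snd measurableSet_Ioi, ?_⟩
  rw [← setIntegral_congr_fun measurableSet_Ioi slice_snd,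
    ← setIntegral_congr_fun measurableSet_Ioi slice_fst]
  exact integral_integral_swap hF

end Fubini

noncomputable def mcKeanWeight (θ : ℝ) : ℝ := exp (-3 * θ / 2) * (π * θ) ^ (-(1:ℝ)/2)

theorem mcKeanWeight_nonneg {θ : ℝ} (hθ : 0 ≤ θ) : 0 ≤ mcKeanWeight θ := by
  unfold mcKeanWeight
  positivity

theorem integrableOn_mcKeanWeight : IntegrableOn mcKeanWeight (Ioi 0) := by
  refine IntegrableOn.congr_fun ((integrableOn_rpow_mul_exp_neg_mul_rpow (s := -(1:ℝ)/2) (p := 1)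
    (b := 3/2) (by norm_num) one_pos (by norm_num)).const_mul (π ^ (-(1:ℝ)/2)))
    (fun θ (hθ : 0 < θ) => ?_) measurableSet_Ioi
  rw [mcKeanWeight, rpow_one, mul_rpow pi_pos.le hθ.le, show -(3/2) * θ = -3 * θ / 2 by ring]
  ring

theorem integral_mcKeanWeight_mul_exp_neg_mul {k : ℝ} (hk : -(3/2) < k) :
    ∫ θ in Ioi 0, mcKeanWeight θ * exp (-(k * θ)) = (√(3/2 + k))⁻¹ := by
  rw [← integral_exp_neg_mul_mul_rpow_neg_half_Ioi (by linarith : 0 < 3/2 + k)]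
  congr 1 with θ
  rw [mcKeanWeight, mul_right_comm, ← exp_add]
  ring_nf

theorem monotone_integral_Ioc_mcKeanWeight : Monotone fun x => ∫ θ in Ioc 0 x, mcKeanWeight θ :=
  fun _ _ hxy => setIntegral_mono_set (integrableOn_mcKeanWeight.mono_set Ioc_subset_Ioi_self)
    (ae_restrict_of_forall_mem measurableSet_Ioc fun _ hθ => mcKeanWeight_nonneg hθ.1.le)
    (Ioc_subset_Ioc_right hxy).eventuallyLE

theorem mcKean_eq (s v : ℝ) :
    mcKean s v = 3 * v / (π * √2) *
      (exp (-(2 * (v ^ 2 - v + 1) / s)) / s ^ 2 * ∫ θ in Ioc 0 (4 * v / s), mcKeanWeight θ) := by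
  change _ * _ * ∫ θ in Ioc 0 (4 * v / s), mcKeanWeight θ = _
  rw [show -2 * (v ^ 2 - v + 1) / s = -(2 * (v ^ 2 - v + 1) / s) by ring]
  ring

theorem mcKean_nonneg {v : ℝ} (hv : 0 ≤ v) (s : ℝ) : 0 ≤ mcKean s v := by
  rw [mcKean_eq]
  have := setIntegral_nonneg (μ := volume) measurableSet_Ioc
    fun θ (hθ : θ ∈ Ioc 0 (4 * v / s)) => mcKeanWeight_nonneg hθ.1.le
  positivity

theorem measurable_mcKean : Measurable fun p : ℝ × ℝ => mcKean p.1 p.2 := by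
  simp only [mcKean_eq]
  exact Measurable.mul (by fun_prop) <| Measurable.mul (by fun_prop)
    (monotone_integral_Ioc_mcKeanWeight.measurable.comp (by fun_prop))

theorem integrableOn_mcKean_Ioi {v : ℝ} (hv : 0 < v) :
    IntegrableOn (fun s => mcKean s v) (Ioi 0) := by
  simp only [mcKean_eq]
  exact ((integral_exp_neg_div_div_sq_mul_integral_Ioc integrableOn_mcKeanWeight (by nlinarith)
    (by positivity : 0 < 4 * v)).1.const_mul _)

theorem integral_mcKean_Ioi {v : ℝ} (hv : 0 < v) :
    ∫ s in Ioi 0, mcKean s v = 3 / (2 * π) * v ^ ((3:ℝ)/2) / (1 + v ^ 3) := by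
  set a := 2 * (v ^ 2 - v + 1) with ha_def
  have ha : 0 < a := by nlinarith
  have hlaplace : ∫ θ in Ioi 0, mcKeanWeight θ * (exp (-(a * θ / (4 * v))) / a)
      = a⁻¹ * (√(3/2 + a / (4 * v)))⁻¹ := by
    have hk : -(3/2) < a / (4 * v) := by linarith [div_pos ha (by positivity : (0:ℝ) < 4 * v)]
    rw [← integral_mcKeanWeight_mul_exp_neg_mul hk, ← integral_const_mul]
    congr 1 with θ
    ring_nf
  have hsqrt : √(3/2 + a / (4 * v)) = (v + 1) / (√2 * √v) := by
    rw [← sqrt_mul zero_le_two,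
      show 3/2 + a / (4 * v) = (v + 1) ^ 2 / (2 * v) by field_simp; ring,
      sqrt_div (sq_nonneg _), sqrt_sq (by linarith)]
  have hpow : v ^ ((3:ℝ)/2) = v * √v := by
    rw [show (3:ℝ)/2 = 1 + 1/2 by norm_num, rpow_add hv, rpow_one, ← sqrt_eq_rpow]
  simp only [mcKean_eq]
  rw [integral_const_mul, (integral_exp_neg_div_div_sq_mul_integral_Ioc integrableOn_mcKeanWeight
    ha (by positivity : 0 < 4 * v)).2, hlaplace, hsqrt, hpow]
  have hcube : a * (v + 1) = 2 * (1 + v ^ 3) := by ring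
  field_simp
  linear_combination hcube

theorem integrable_mcKean_prod : Integrable (fun p : ℝ × ℝ => mcKean p.1 p.2)
    ((volume.restrict (Ioi 0)).prod (volume.restrict (Ioi 0))) := by
  rw [integrable_prod_iff' measurable_mcKean.aestronglyMeasurable]
  refine ⟨ae_restrict_of_forall_mem measurableSet_Ioi fun _ hv => integrableOn_mcKean_Ioi hv, ?_⟩
  refine IntegrableOn.congr_fun
    (integrableOn_rpow_three_halves_div_one_add_cube.const_mul (3 / (2 * π)))
    (fun v (hv : 0 < v) => ?_) measurableSet_Ioi
  rw [← mul_div_assoc, ← integral_mcKean_Ioi hv]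
  exact setIntegral_congr_fun measurableSet_Ioi fun s _ =>
    (norm_of_nonneg (mcKean_nonneg hv.le s)).symm

theorem stmt_10 :
    (∀ s v : ℝ, 0 < s → 0 < v → 0 ≤ mcKean s v) ∧
    (∫ p in (Set.Ioi (0:ℝ)) ×ˢ (Set.Ioi (0:ℝ)), mcKean p.1 p.2) = 1 ∧
    (∀ v : ℝ, 0 < v →
      (∫ s in Set.Ioi (0:ℝ), mcKean s v)
        = (3 / (2 * π)) * v ^ ((3:ℝ)/2) / (1 + v ^ (3:ℕ))) := by
  refine ⟨fun s v _ hv => mcKean_nonneg hv.le s, ?_, fun v hv => integral_mcKean_Ioi hv⟩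
  rw [Measure.volume_eq_prod, ← Measure.prod_restrict,
    integral_prod_symm _ integrable_mcKean_prod,
    setIntegral_congr_fun measurableSet_Ioi fun _ hv => integral_mcKean_Ioi hv]
  simp_rw [mul_div_assoc]
  rw [integral_const_mul, integral_rpow_three_halves_div_one_add_cube]
  field_simp
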